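/- With the setup of the previous identity, since Tr((γγ†)²) ≥ 0, one has Σ_{s,s',a,b,c,d} |⟨e_s, Tr_e([M_{a,b,c,d}, |ψ⟩⟨ψ|]) e_{s'}⟩|² ≤ 2·dim(H_s). -/

import Mathlib

/-! `Tr_e([M_{abcd}, |ψ⟩⟨ψ|])` has entries `δ_{sa} γ_{bd} γ̄_{s'c} - δ_{s'b} γ_{sd} γ̄_{ac}`.
Summing the squared moduli, each of the two terms contributes `dim H_s · ‖γ‖⁴`, and the cross
term contributes `∑_{s,s'} |(γγ†)_{ss'}|² = Tr((γγ†)²) ≥ 0`. Hence the sum equals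
`2 dim H_s - 2 Tr((γγ†)²) ≤ 2 dim H_s` when `‖γ‖ = 1`. -/

open scoped ComplexConjugate Matrix

/-- The partial trace over the environment index of a matrix on the product index set. -/
noncomputable def ptraceE {ds de : ℕ} (A : Matrix (Fin ds × Fin de) (Fin ds × Fin de) ℂ) :
    Matrix (Fin ds) (Fin ds) ℂ :=
  Matrix.of fun s s' => ∑ e : Fin de, A (s, e) (s', e)

/-- The rank-one projector `|ψ⟩⟨ψ|` of the pure state with coefficient matrix `γ`. -/
def pureState {ds de : ℕ} (γ : Matrix (Fin ds) (Fin de) ℂ) :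
    Matrix (Fin ds × Fin de) (Fin ds × Fin de) ℂ :=
  Matrix.of fun p q => γ p.1 p.2 * conj (γ q.1 q.2)

/-- The elementary tensor operator `M_{a,b,c,d} = |e_a⟩⟨e_b| ⊗ |f_c⟩⟨f_d|`. -/
def elemOp {ds de : ℕ} (a b : Fin ds) (c d : Fin de) :
    Matrix (Fin ds × Fin de) (Fin ds × Fin de) ℂ :=
  Matrix.of fun p q => if p = (a, c) ∧ q = (b, d) then 1 else 0

lemma trace_mul_conjTranspose_eq_sum_norm_sq {m n : Type*} [Fintype m] [Fintype n]
    (A : Matrix m n ℂ) : (A * Aᴴ).trace = ((∑ i, ∑ j, ‖A i j‖ ^ 2 : ℝ) : ℂ) := by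
  simp [Matrix.trace, Matrix.mul_apply, Complex.mul_conj, Complex.sq_norm]

section
variable {ds de : ℕ}

lemma ptraceE_sub (A B : Matrix (Fin ds × Fin de) (Fin ds × Fin de) ℂ) :
    ptraceE (A - B) = ptraceE A - ptraceE B := by
  ext s s'
  simp [ptraceE, Finset.sum_sub_distrib]

variable (γ : Matrix (Fin ds) (Fin de) ℂ)

lemma ptraceE_elemOp_mul_pureState_apply (a b s s' : Fin ds) (c d : Fin de) :
    ptraceE (elemOp a b c d * pureState γ) s s' =
      if s = a then γ b d * conj (γ s' c) else 0 := by
  simp [ptraceE, elemOp, pureState, Matrix.mul_apply, Fintype.sum_prod_type, Prod.ext_iff,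
    ite_and, eq_comm]

lemma ptraceE_pureState_mul_elemOp_apply (a b s s' : Fin ds) (c d : Fin de) :
    ptraceE (pureState γ * elemOp a b c d) s s' =
      if s' = b then γ s d * conj (γ a c) else 0 := by
  simp [ptraceE, elemOp, pureState, Matrix.mul_apply, Fintype.sum_prod_type, Prod.ext_iff,
    ite_and, eq_comm]

lemma sum_norm_sq_ptraceE_elemOp_mul_pureState :
    ∑ s : Fin ds, ∑ s' : Fin ds, ∑ a : Fin ds, ∑ b : Fin ds, ∑ c : Fin de, ∑ d : Fin de,
        ‖ptraceE (elemOp a b c d * pureState γ) s s'‖ ^ 2 =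
      ds * (∑ i, ∑ j, ‖γ i j‖ ^ 2) ^ 2 := by
  simp only [ptraceE_elemOp_mul_pureState_apply, apply_ite (‖·‖ ^ 2), norm_mul,
    Complex.norm_conj, mul_pow, norm_zero]
  simp [← Finset.mul_sum, ← Finset.sum_mul, sq]

lemma sum_norm_sq_ptraceE_pureState_mul_elemOp :
    ∑ s : Fin ds, ∑ s' : Fin ds, ∑ a : Fin ds, ∑ b : Fin ds, ∑ c : Fin de, ∑ d : Fin de,
        ‖ptraceE (pureState γ * elemOp a b c d) s s'‖ ^ 2 =
      ds * (∑ i, ∑ j, ‖γ i j‖ ^ 2) ^ 2 := by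
  simp only [ptraceE_pureState_mul_elemOp_apply, apply_ite (‖·‖ ^ 2), norm_mul,
    Complex.norm_conj, mul_pow, norm_zero]
  simp [← Finset.mul_sum, ← Finset.sum_mul, sq]

lemma sum_re_ptraceE_elemOp_mul_pureState_mul_conj :
    ∑ s : Fin ds, ∑ s' : Fin ds, ∑ a : Fin ds, ∑ b : Fin ds, ∑ c : Fin de, ∑ d : Fin de,
        (ptraceE (elemOp a b c d * pureState γ) s s' *
          conj (ptraceE (pureState γ * elemOp a b c d) s s')).re =
      ∑ s, ∑ s', ‖(γ * γᴴ) s s'‖ ^ 2 := by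
  simp only [ptraceE_elemOp_mul_pureState_apply, ptraceE_pureState_mul_elemOp_apply, ite_mul,
    mul_ite, apply_ite conj, map_zero, zero_mul, mul_zero, apply_ite Complex.re, Complex.zero_re,
    Finset.sum_ite_irrel, Finset.sum_const_zero, Finset.sum_ite_eq, Finset.mem_univ, if_true]
  refine Finset.sum_congr rfl fun s _ => Finset.sum_congr rfl fun s' _ => ?_
  rw [← Complex.normSq_eq_norm_sq, ← Complex.ofReal_re (Complex.normSq _), ← Complex.mul_conj,
    Matrix.mul_apply, map_sum, Finset.sum_mul_sum, Complex.re_sum]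
  simp only [Matrix.conjTranspose_apply, Complex.re_sum, map_mul, Complex.conj_conj,
    RCLike.star_def]
  exact Finset.sum_congr rfl fun c _ => Finset.sum_congr rfl fun d _ =>
    congrArg Complex.re (by ring)

theorem sum_norm_sq_ptraceE_commutator_elemOp_pureState :
    ∑ s : Fin ds, ∑ s' : Fin ds, ∑ a : Fin ds, ∑ b : Fin ds, ∑ c : Fin de, ∑ d : Fin de,
        ‖ptraceE (elemOp a b c d * pureState γ - pureState γ * elemOp a b c d) s s'‖ ^ 2 =
      2 * ds * (∑ i, ∑ j, ‖γ i j‖ ^ 2) ^ 2 - 2 * ∑ s, ∑ s', ‖(γ * γᴴ) s s'‖ ^ 2 := by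
  have norm_sub_sq_eq (z w : ℂ) : ‖z - w‖ ^ 2 = ‖z‖ ^ 2 + ‖w‖ ^ 2 - 2 * (z * conj w).re := by
    simp only [Complex.sq_norm, Complex.normSq_sub]
  simp only [ptraceE_sub, Matrix.sub_apply, norm_sub_sq_eq, Finset.sum_add_distrib,
    Finset.sum_sub_distrib, ← Finset.mul_sum]
  rw [sum_norm_sq_ptraceE_elemOp_mul_pureState, sum_norm_sq_ptraceE_pureState_mul_elemOp,
    sum_re_ptraceE_elemOp_mul_pureState_mul_conj]
  ring

end

/-- Since `Tr((γγ†)²) ≥ 0`, for a unit vector `ψ` with coefficient matrix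
`γ` one has `∑_{s,s',a,b,c,d} |⟨e_s, Tr_e([M_{a,b,c,d}, |ψ⟩⟨ψ|]) e_{s'}⟩|² ≤ 2 dim H_s`. -/
theorem stmt8 {ds de : ℕ} (γ : Matrix (Fin ds) (Fin de) ℂ)
    (hγ : Matrix.trace (γ * γᴴ) = 1) :
    ∑ s : Fin ds, ∑ s' : Fin ds, ∑ a : Fin ds, ∑ b : Fin ds, ∑ c : Fin de, ∑ d : Fin de,
        ‖ptraceE (elemOp a b c d * pureState γ - pureState γ * elemOp a b c d) s s'‖ ^ 2
      ≤ 2 * ds := by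
  have hnorm : ∑ i, ∑ j, ‖γ i j‖ ^ 2 = 1 := by
    exact_mod_cast (trace_mul_conjTranspose_eq_sum_norm_sq γ).symm.trans hγ
  have hpurity : 0 ≤ ∑ s, ∑ s', ‖(γ * γᴴ) s s'‖ ^ 2 := by positivity
  rw [sum_norm_sq_ptraceE_commutator_elemOp_pureState, hnorm]
  linarith
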